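/- Let A be a quasi-cocommutative quasitriangular K[[ℏ]]-bialgebra with R-matrix R_A ∈ 1 + ℏ A^{⊗2}, and suppose A is torsion-free. Set A₀ = A/ℏA and r = ((R_A − 1)/ℏ mod ℏ) ∈ A₀^{⊗2}. Then: (i) (Δ₀⊗id)(r) = r^{13} + r^{23} and (id⊗Δ₀)(r) = r^{12} + r^{13}; (ii) r satisfies the classical Yang–Baxter equation [r^{12},r^{13}] + [r^{12},r^{23}] + [r^{13},r^{23}] = 0; (iii) t = r + r^{21} satisfies [t, Δ₀(x)] = 0 for all x ∈ A₀. -/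

import Mathlib

/-!
Write `R = 1 + ℏρ`. The identities (i) are the order-`ℏ` parts of `(Δ ⊗ id)(R) = R¹³R²³` and
`(id ⊗ Δ)(R) = R¹³R¹²`, and the classical Yang–Baxter equation is the order-`ℏ²` part of the
quantum one, `R¹²R¹³R²³ = R²³R¹³R¹²`, which follows from `R¹² (Δ ⊗ id)(R) = (Δᵒᵖ ⊗ id)(R) R¹²`.
For (iii), `Δᵒᵖ(x) R = R Δ(x)` and its image under the flip each express `Δᵒᵖ(x) - Δ(x)` as a
multiple of `ℏ`; the two expressions cancel, which says that `ρ + ρ²¹` commutes with `Δ(x)`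
modulo `ℏ`.
Torsion-freeness is what allows dividing by `ℏ`.
-/

open TensorProduct

noncomputable section

variable (K : Type*) [Field K] [CharZero K]
variable (A : Type*) [Ring A] [Bialgebra (PowerSeries K) A]

/-- `x ⊗ y ↦ x ⊗ y ⊗ 1`. -/
def e12 : A ⊗[PowerSeries K] A →ₗ[PowerSeries K] A ⊗[PowerSeries K] (A ⊗[PowerSeries K] A) :=
  TensorProduct.map LinearMap.id ((TensorProduct.mk (PowerSeries K) A A).flip 1)

/-- `t ↦ 1 ⊗ t`. -/
def e23 : A ⊗[PowerSeries K] A →ₗ[PowerSeries K] A ⊗[PowerSeries K] (A ⊗[PowerSeries K] A) :=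
  TensorProduct.mk (PowerSeries K) A (A ⊗[PowerSeries K] A) 1

/-- `x ⊗ y ↦ x ⊗ 1 ⊗ y`. -/
def e13 : A ⊗[PowerSeries K] A →ₗ[PowerSeries K] A ⊗[PowerSeries K] (A ⊗[PowerSeries K] A) :=
  (TensorProduct.map LinearMap.id (TensorProduct.comm (PowerSeries K) A A).toLinearMap) ∘ₗ
    e12 K A

/-- The flip of `A ⊗ A`. -/
def tau : A ⊗[PowerSeries K] A →ₗ[PowerSeries K] A ⊗[PowerSeries K] A :=
  (TensorProduct.comm (PowerSeries K) A A).toLinearMap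

/-- `Δ ⊗ id : A ⊗ A → A ⊗ (A ⊗ A)`. -/
def D1 : A ⊗[PowerSeries K] A →ₗ[PowerSeries K] A ⊗[PowerSeries K] (A ⊗[PowerSeries K] A) :=
  (TensorProduct.assoc (PowerSeries K) A A A).toLinearMap ∘ₗ
    TensorProduct.map Coalgebra.comul LinearMap.id

/-- `id ⊗ Δ : A ⊗ A → A ⊗ (A ⊗ A)`. -/
def D2 : A ⊗[PowerSeries K] A →ₗ[PowerSeries K] A ⊗[PowerSeries K] (A ⊗[PowerSeries K] A) :=
  TensorProduct.map LinearMap.id Coalgebra.comul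

section

variable {R B : Type*} [CommRing R] [Ring B] [Algebra R B] {h : R}

theorem sub_add_eq_smul_mul_of_one_add_smul_eq_mul (hh : IsSMulRegular B h) {a b c : B}
    (H : 1 + h • a = (1 + h • b) * (1 + h • c)) : a - (b + c) = h • (b * c) := by
  refine hh ?_
  rw [← sub_eq_zero] at H
  rw [← sub_eq_zero, ← H]
  simp only [mul_add, add_mul, one_mul, mul_one, smul_mul_assoc, mul_smul_comm, smul_sub,
    smul_add, smul_smul]
  abel

theorem commutator_sum_eq_smul_of_yangBaxter (hh : IsSMulRegular B h) {x y z : B}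
    (H : (1 + h • x) * ((1 + h • y) * (1 + h • z)) = (1 + h • z) * (1 + h • y) * (1 + h • x)) :
    (x * y - y * x) + (x * z - z * x) + (y * z - z * y) = h • (z * y * x - x * (y * z)) := by
  refine hh (hh ?_)
  rw [← sub_eq_zero] at H
  rw [← sub_eq_zero, ← H]
  simp only [mul_add, add_mul, one_mul, mul_one, smul_mul_assoc, mul_smul_comm, smul_sub,
    smul_add, smul_smul, mul_assoc]
  abel

theorem exists_commutator_eq_smul_of_mul_one_add_smul_eq (hh : IsSMulRegular B h)
    (τ : B →ₐ[R] B) (hτ : Function.Involutive τ) {ρ d : B}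
    (H : τ d * (1 + h • ρ) = (1 + h • ρ) * d) :
    ∃ w, (ρ + τ ρ) * d - d * (ρ + τ ρ) = h • w := by
  have hd : τ d - d = h • (ρ * d - τ d * ρ) := by
    rw [← sub_eq_zero] at H
    rw [← sub_eq_zero, ← H]
    simp only [mul_add, add_mul, one_mul, mul_one, smul_mul_assoc, mul_smul_comm, smul_sub]
    abel
  have hd' : d - τ d = h • (τ ρ * τ d - d * τ ρ) := by
    simpa only [map_sub, map_mul, map_smul, hτ d] using congrArg τ hd
  -- the two expansions of `τ d - d` cancel
  have hsum : ρ * d - τ d * ρ + (τ ρ * τ d - d * τ ρ) = 0 :=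
    hh.right_eq_zero_of_smul (by rw [smul_add, ← hd, ← hd']; abel)
  refine ⟨(ρ * d - τ d * ρ) * ρ - τ ρ * (ρ * d - τ d * ρ), ?_⟩
  calc (ρ + τ ρ) * d - d * (ρ + τ ρ) = (τ d - d) * ρ - τ ρ * (τ d - d) := by
        rw [← sub_eq_zero, ← hsum]; noncomm_ring
    _ = _ := by rw [hd, smul_mul_assoc, mul_smul_comm, smul_sub]

end

theorem tmul_one_mul_map_eq {R M B C : Type*} [CommSemiring R] [AddCommMonoid M] [Module R M]
    [Semiring B] [Algebra R B] [Semiring C] [Algebra R C]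
    (g : M →ₗ[R] B) (f : B →ₗ[R] B) {r : B} (hr : ∀ m, r * g m = f (g m) * r) (x : M ⊗[R] C) :
    (r ⊗ₜ[R] (1 : C)) * map g LinearMap.id x =
      map f LinearMap.id (map g LinearMap.id x) * (r ⊗ₜ[R] (1 : C)) := by
  induction x using TensorProduct.induction_on with
  | zero => simp
  | tmul m c => simp [Algebra.TensorProduct.tmul_mul_tmul, hr]
  | add x y hx hy => simp only [map_add, mul_add, add_mul, hx, hy]

section

omit [CharZero K]

local notation "𝕊" => PowerSeries K

theorem D1_eq_assoc (w : A ⊗[𝕊] A) :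
    D1 K A w = Algebra.TensorProduct.assoc 𝕊 𝕊 𝕊 A A A (map Coalgebra.comul LinearMap.id w) :=
  rfl

theorem e12_eq_assoc (u : A ⊗[𝕊] A) :
    e12 K A u = Algebra.TensorProduct.assoc 𝕊 𝕊 𝕊 A A A (u ⊗ₜ 1) := by
  induction u using TensorProduct.induction_on with
  | zero => simp
  | tmul a b => rfl
  | add x y hx hy => simp only [map_add, add_tmul, hx, hy]

def flip12 : A ⊗[𝕊] (A ⊗[𝕊] A) ≃ₐ[𝕊] A ⊗[𝕊] (A ⊗[𝕊] A) :=
  ((Algebra.TensorProduct.assoc 𝕊 𝕊 𝕊 A A A).symm.trans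
    (Algebra.TensorProduct.congr (Algebra.TensorProduct.comm 𝕊 A A) AlgEquiv.refl)).trans
    (Algebra.TensorProduct.assoc 𝕊 𝕊 𝕊 A A A)

theorem flip12_assoc (y : (A ⊗[𝕊] A) ⊗[𝕊] A) :
    flip12 K A (Algebra.TensorProduct.assoc 𝕊 𝕊 𝕊 A A A y) =
      Algebra.TensorProduct.assoc 𝕊 𝕊 𝕊 A A A (map (tau K A) LinearMap.id y) := by
  simp only [flip12, AlgEquiv.trans_apply, AlgEquiv.symm_apply_apply]
  rfl

theorem flip12_e13 (u : A ⊗[𝕊] A) : flip12 K A (e13 K A u) = e23 K A u := by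
  induction u using TensorProduct.induction_on with
  | zero => simp
  | tmul a b => rfl
  | add x y hx hy => simp only [map_add, hx, hy]

theorem flip12_e23 (u : A ⊗[𝕊] A) : flip12 K A (e23 K A u) = e13 K A u := by
  induction u using TensorProduct.induction_on with
  | zero => simp
  | tmul a b => rfl
  | add x y hx hy => simp only [map_add, hx, hy]

theorem e12_mul_D1 {R : A ⊗[𝕊] A}
    (hR : ∀ x : A, tau K A (Coalgebra.comul x) * R = R * Coalgebra.comul x) (w : A ⊗[𝕊] A) :
    e12 K A R * D1 K A w = flip12 K A (D1 K A w) * e12 K A R := by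
  rw [e12_eq_assoc, D1_eq_assoc, ← map_mul, tmul_one_mul_map_eq _ _ (fun x => (hR x).symm),
    map_mul, flip12_assoc]

theorem yangBaxter_of_comul {R : A ⊗[𝕊] A} (hΔ : D1 K A R = e13 K A R * e23 K A R)
    (hR : ∀ x : A, tau K A (Coalgebra.comul x) * R = R * Coalgebra.comul x) :
    e12 K A R * (e13 K A R * e23 K A R) = e23 K A R * e13 K A R * e12 K A R := by
  rw [← hΔ, e12_mul_D1 K A hR, hΔ, map_mul, flip12_e13, flip12_e23]

theorem tau_involutive : Function.Involutive (tau K A) :=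
  TensorProduct.comm_comm 𝕊 A A

theorem D1_one : D1 K A 1 = 1 := by
  rw [Algebra.TensorProduct.one_def, D1_eq_assoc, map_tmul, Bialgebra.comul_one]
  rfl

theorem D2_one : D2 K A 1 = 1 := by
  rw [Algebra.TensorProduct.one_def, D2, map_tmul, Bialgebra.comul_one]
  rfl

end

theorem stmt8
    (htf2 : ∀ z : A ⊗[PowerSeries K] A, (PowerSeries.X : PowerSeries K) • z = 0 → z = 0)
    (htf3 : ∀ z : A ⊗[PowerSeries K] (A ⊗[PowerSeries K] A),
      (PowerSeries.X : PowerSeries K) • z = 0 → z = 0)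
    (ρ : A ⊗[PowerSeries K] A)
    -- `(Δ⊗id)(R) = R^{13} R^{23}`
    (hqt1 : D1 K A (1 + (PowerSeries.X : PowerSeries K) • ρ) =
      (1 + (PowerSeries.X : PowerSeries K) • e13 K A ρ) *
        (1 + (PowerSeries.X : PowerSeries K) • e23 K A ρ))
    -- `(id⊗Δ)(R) = R^{13} R^{12}`
    (hqt2 : D2 K A (1 + (PowerSeries.X : PowerSeries K) • ρ) =
      (1 + (PowerSeries.X : PowerSeries K) • e13 K A ρ) *
        (1 + (PowerSeries.X : PowerSeries K) • e12 K A ρ))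
    -- `Δ^{op}(x) R = R Δ(x)`
    (hqt3 : ∀ x : A,
      tau K A (Coalgebra.comul x) * (1 + (PowerSeries.X : PowerSeries K) • ρ) =
        (1 + (PowerSeries.X : PowerSeries K) • ρ) * Coalgebra.comul x) :
    -- (i)
    (∃ z, D1 K A ρ - (e13 K A ρ + e23 K A ρ) = (PowerSeries.X : PowerSeries K) • z) ∧
    (∃ z, D2 K A ρ - (e12 K A ρ + e13 K A ρ) = (PowerSeries.X : PowerSeries K) • z) ∧
    -- (ii)  CYB(ρ) ≡ 0 mod ℏ
    (∃ z, (e12 K A ρ * e13 K A ρ - e13 K A ρ * e12 K A ρ) +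
        (e12 K A ρ * e23 K A ρ - e23 K A ρ * e12 K A ρ) +
        (e13 K A ρ * e23 K A ρ - e23 K A ρ * e13 K A ρ) =
        (PowerSeries.X : PowerSeries K) • z) ∧
    -- (iii)
    (∀ x : A, ∃ z,
      (ρ + tau K A ρ) * Coalgebra.comul x - Coalgebra.comul x * (ρ + tau K A ρ) =
        (PowerSeries.X : PowerSeries K) • z) := by
  set X : PowerSeries K := PowerSeries.X
  have hh2 : IsSMulRegular (A ⊗[PowerSeries K] A) X := fun _ _ h =>
    sub_eq_zero.mp (htf2 _ (by rw [smul_sub]; exact sub_eq_zero.mpr h))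
  have hh3 : IsSMulRegular (A ⊗[PowerSeries K] (A ⊗[PowerSeries K] A)) X := fun _ _ h =>
    sub_eq_zero.mp (htf3 _ (by rw [smul_sub]; exact sub_eq_zero.mpr h))
  have one_add
      (f : A ⊗[PowerSeries K] A →ₗ[PowerSeries K] A ⊗[PowerSeries K] (A ⊗[PowerSeries K] A))
      (hf : f 1 = 1) : f (1 + X • ρ) = 1 + X • f ρ := by
    rw [map_add, map_smul, hf]
  refine ⟨?_, ?_, ?_, fun x => exists_commutator_eq_smul_of_mul_one_add_smul_eq hh2
    (Algebra.TensorProduct.comm _ A A).toAlgHom (tau_involutive K A) (hqt3 x)⟩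
  · exact ⟨_, sub_add_eq_smul_mul_of_one_add_smul_eq_mul hh3
      (by rw [← one_add _ (D1_one K A), hqt1])⟩
  · rw [add_comm]
    exact ⟨_, sub_add_eq_smul_mul_of_one_add_smul_eq_mul hh3
      (by rw [← one_add _ (D2_one K A), hqt2])⟩
  · have h12 := one_add (e12 K A) rfl
    have h13 := one_add (e13 K A) rfl
    have h23 := one_add (e23 K A) rfl
    have hR := yangBaxter_of_comul K A (R := 1 + X • ρ) (by rw [hqt1, h13, h23]) hqt3
    rw [h12, h13, h23] at hR
    exact ⟨_, commutator_sum_eq_smul_of_yangBaxter hh3 hR⟩
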